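/- Steerability of a convolution from an equivariant kernel: if a kernel k : ℝ^c → ℝ^{c_out × c_in} satisfies k(gx) = ρ_out(g) k(x) ρ_in(g)^{-1} for all g in a group G acting on ℝ^c by measure-preserving linear maps, then the convolution operator Φ(f)(x) = ∫ k(y) f(x − y) dy satisfies Φ(π_in(g)f) = π_out(g)Φ(f), where (π_i(g)f)(x) = ρ_i(g) f(g^{-1}x). -/

import Mathlib

open MeasureTheory Matrix

/-!
Substituting `y ↦ g y` in the convolution integral is allowed because `g` preserves Lebesgue
measure. After the substitution the kernel constraint turns `k (g y) (ρ_in g v)` into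
`ρ_out g (k y v)`, and `g⁻¹ (x - g y) = g⁻¹ x - y`, so the integrand becomes `ρ_out g` applied
to the integrand of `Φ f (g⁻¹ x)`; the matrix `ρ_out g` then commutes with the integral.
-/

theorem Matrix.integral_mulVec {α m n 𝕜 : Type*} [MeasurableSpace α] {μ : Measure α}
    [Fintype m] [Fintype n] [RCLike 𝕜] (M : Matrix m n 𝕜) {F : α → n → 𝕜}
    (hF : Integrable F μ) : ∫ a, M *ᵥ F a ∂μ = M *ᵥ ∫ a, F a ∂μ :=
  (LinearMap.toContinuousLinearMap M.mulVecLin).integral_comp_comm hF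

theorem Matrix.GeneralLinearGroup.mul_mul_inv_mulVec_mulVec {m n R : Type*} [Fintype m]
    [Fintype n] [DecidableEq n] [CommRing R] (P : Matrix m m R) (M : Matrix m n R)
    (Q : GL n R) (v : n → R) :
    (P * M * (Q : Matrix n n R)⁻¹) *ᵥ ((Q : Matrix n n R) *ᵥ v) = P *ᵥ (M *ᵥ v) := by
  rw [mulVec_mulVec, mulVec_mulVec, Matrix.mul_assoc, Matrix.mul_assoc, ← coe_units_inv,
    ← Units.val_mul, inv_mul_cancel, Units.val_one, Matrix.mul_one]

theorem MonoidHom.map_inv_apply_sub_map_apply {G R V : Type*} [Group G] [Semiring R]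
    [AddCommGroup V] [Module R V] (A : G →* (V ≃ₗ[R] V)) (g : G) (x y : V) :
    A g⁻¹ (x - A g y) = A g⁻¹ x - y := by
  rw [map_sub, ← LinearEquiv.mul_apply, ← map_mul, inv_mul_cancel, map_one]
  rfl

theorem MeasureTheory.MeasurePreserving.integral_comp_linearEquiv {V W E : Type*}
    [NormedAddCommGroup V] [NormedSpace ℝ V] [FiniteDimensional ℝ V] [MeasurableSpace V]
    [BorelSpace V] [NormedAddCommGroup W] [NormedSpace ℝ W] [MeasurableSpace W]
    [BorelSpace W] [NormedAddCommGroup E] [NormedSpace ℝ E] {μ : Measure V} {ν : Measure W}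
    {e : V ≃ₗ[ℝ] W} (he : MeasurePreserving e μ ν) (F : W → E) :
    ∫ y, F (e y) ∂μ = ∫ y, F y ∂ν :=
  he.integral_comp e.toContinuousLinearEquiv.toHomeomorph.measurableEmbedding F

theorem steerable_convolution_general {G : Type*} [Group G] (c cin cout : ℕ)
    (A : G →* ((Fin c → ℝ) ≃ₗ[ℝ] (Fin c → ℝ)))
    (hA : ∀ g : G, MeasurePreserving (A g) (volume : Measure (Fin c → ℝ)) volume)
    (ρin : G →* Matrix.GeneralLinearGroup (Fin cin) ℝ)
    (ρout : G →* Matrix.GeneralLinearGroup (Fin cout) ℝ)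
    (k : (Fin c → ℝ) → Matrix (Fin cout) (Fin cin) ℝ)
    (hk : ∀ (g : G) (x : Fin c → ℝ),
      k (A g x) = (ρout g : Matrix (Fin cout) (Fin cout) ℝ) * k x *
        ((ρin g)⁻¹ : Matrix (Fin cin) (Fin cin) ℝ))
    (f : (Fin c → ℝ) → (Fin cin → ℝ))
    (hf' : ∀ x : Fin c → ℝ,
      Integrable (fun y => (k y).mulVec (f (x - y))) (volume : Measure (Fin c → ℝ)))
    (g : G) (x : Fin c → ℝ) :
    (∫ y, (k y).mulVec
        ((ρin g : Matrix (Fin cin) (Fin cin) ℝ).mulVec (f (A g⁻¹ (x - y))))) =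
      (ρout g : Matrix (Fin cout) (Fin cout) ℝ).mulVec
        (∫ y, (k y).mulVec (f (A g⁻¹ x - y))) := by
  calc (∫ y, k y *ᵥ ((ρin g : Matrix (Fin cin) (Fin cin) ℝ) *ᵥ f (A g⁻¹ (x - y))))
      = ∫ y, k (A g y) *ᵥ ((ρin g : Matrix (Fin cin) (Fin cin) ℝ) *ᵥ f (A g⁻¹ (x - A g y))) :=
        ((hA g).integral_comp_linearEquiv _).symm
    _ = ∫ y, (ρout g : Matrix (Fin cout) (Fin cout) ℝ) *ᵥ (k y *ᵥ f (A g⁻¹ x - y)) := by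
        simp only [hk, GeneralLinearGroup.mul_mul_inv_mulVec_mulVec,
          A.map_inv_apply_sub_map_apply]
    _ = _ := integral_mulVec _ (hf' _)

/-- Steerability of a convolution built from an equivariant kernel: if the kernel
satisfies k(gx) = ρ_out(g) k(x) ρ_in(g)⁻¹ and G acts on ℝ^c by measure-preserving
linear maps, then Φ(f)(x) = ∫ k(y) f(x − y) dy satisfies Φ(π_in(g)f) = π_out(g)Φ(f). -/
theorem steerable_convolution {G : Type*} [Group G] (c cin cout : ℕ)
    (A : G →* ((Fin c → ℝ) ≃ₗ[ℝ] (Fin c → ℝ)))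
    (hA : ∀ g : G, MeasurePreserving (A g) (volume : Measure (Fin c → ℝ)) volume)
    (ρin : G →* Matrix.GeneralLinearGroup (Fin cin) ℝ)
    (ρout : G →* Matrix.GeneralLinearGroup (Fin cout) ℝ)
    (k : (Fin c → ℝ) → Matrix (Fin cout) (Fin cin) ℝ)
    (hk : ∀ (g : G) (x : Fin c → ℝ),
      k (A g x) = (ρout g : Matrix (Fin cout) (Fin cout) ℝ) * k x *
        ((ρin g)⁻¹ : Matrix (Fin cin) (Fin cin) ℝ))
    (f : (Fin c → ℝ) → (Fin cin → ℝ))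
    (hf : ∀ (g : G) (x : Fin c → ℝ),
      Integrable (fun y => (k y).mulVec
        (((ρin g : Matrix (Fin cin) (Fin cin) ℝ)).mulVec (f (A g⁻¹ (x - y)))))
        (volume : Measure (Fin c → ℝ)))
    (hf' : ∀ x : Fin c → ℝ,
      Integrable (fun y => (k y).mulVec (f (x - y))) (volume : Measure (Fin c → ℝ)))
    (g : G) (x : Fin c → ℝ) :
    (∫ y, (k y).mulVec
        ((ρin g : Matrix (Fin cin) (Fin cin) ℝ).mulVec (f (A g⁻¹ (x - y))))) =
      (ρout g : Matrix (Fin cout) (Fin cout) ℝ).mulVec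
        (∫ y, (k y).mulVec (f (A g⁻¹ x - y))) :=
  steerable_convolution_general c cin cout A hA ρin ρout k hk f hf' g x
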